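/- An asymptotically stable function F violating the finitary Ramsey theorem exists if and only if there is a coloring of the d-element subsets of ℕ with k colors having no infinite homogeneous set; consequently, since the infinite Ramsey theorem holds, for every asymptotically stable F there exists R such that every k-coloring of d-element subsets of {0,...,R} admits a homogeneous set H with |H| > F(H). -/

import Mathlib

/-!
Both sides of the equivalence are false. The infinite Ramsey theorem, proved by induction on `d`
(build a sequence along which the colour of a set depends only on its least element, then apply
the pigeonhole principle), refutes the right-hand side. For the finitary statement, an
ultrafilter limit of counterexample colourings, one for each `R`, gives a colouring of the finite
subsets of ℕ whose finite homogeneous sets `H` all satisfy `H.card ≤ F H`. Its infinite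
homogeneous set contradicts asymptotic stability along the chain of its initial segments.
-/

/-- `H` is homogeneous for the colouring `C` of `d`-element finite sets:
`C` is constant on the `d`-element subsets of `H`. -/
def HomogF (k d : ℕ) (C : Finset ℕ → Fin k) (H : Finset ℕ) : Prop :=
  ∃ c : Fin k, ∀ s : Finset ℕ, s ⊆ H → s.card = d → C s = c

/-- Homogeneity for a (possibly infinite) set `H ⊆ ℕ`. -/
def HomogS (k d : ℕ) (C : Finset ℕ → Fin k) (H : Set ℕ) : Prop :=
  ∃ c : Fin k, ∀ s : Finset ℕ, ↑s ⊆ H → s.card = d → C s = c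

/-- `F` is asymptotically stable: on every increasing chain of finite sets
the value of `F` eventually stabilises. -/
def AsympStable (F : Finset ℕ → ℕ) : Prop :=
  ∀ X : ℕ → Finset ℕ, (∀ i, X i ⊆ X (i + 1)) →
    ∃ i, ∀ j, i ≤ j → F (X j) = F (X i)

open Set

variable {k d : ℕ}

lemma HomogS.homogF {C : Finset ℕ → Fin k} {T : Set ℕ} (hT : HomogS k d C T)
    {H : Finset ℕ} (hH : ↑H ⊆ T) : HomogF k d C H :=
  let ⟨c, hc⟩ := hT
  ⟨c, fun s hs hcard => hc s ((Finset.coe_subset.mpr hs).trans hH) hcard⟩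

/-- Take the least element of the current set and shrink the rest, by the hypothesis for `d`,
to a set homogeneous for `s ↦ C (insert min s)`; iterate. -/
lemma exists_strictMono_insert_const
    (ih : ∀ (C : Finset ℕ → Fin k) (S : Set ℕ), S.Infinite → ∃ T ⊆ S, T.Infinite ∧ HomogS k d C T)
    (C : Finset ℕ → Fin k) {S : Set ℕ} (hS : S.Infinite) :
    ∃ (a : ℕ → ℕ) (col : ℕ → Fin k), StrictMono a ∧ (∀ n, a n ∈ S) ∧
      ∀ n (s : Finset ℕ), ↑s ⊆ a '' Ioi n → s.card = d → C (insert (a n) s) = col n := by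
  have step : ∀ T : Set ℕ, T.Infinite → ∃ T' ⊆ T \ Iic (sInf T), T'.Infinite ∧
      HomogS k d (fun s => C (insert (sInf T) s)) T' := fun T hT =>
    ih _ _ (hT.sdiff (finite_Iic _))
  choose! next hnext_sub hnext_inf hnext_homog using step
  set Sq : ℕ → Set ℕ := fun n => next^[n] S
  have hSq_succ (n : ℕ) : Sq (n + 1) = next (Sq n) := Function.iterate_succ_apply' next n S
  have hSq_inf (n : ℕ) : (Sq n).Infinite := by
    induction n with
    | zero => exact hS
    | succ n ih => rw [hSq_succ]; exact hnext_inf _ ih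
  have hSq_anti : Antitone Sq := antitone_nat_of_succ_le fun n =>
    (hSq_succ n ▸ hnext_sub _ (hSq_inf n)).trans sdiff_subset
  set a : ℕ → ℕ := fun n => sInf (Sq n)
  have ha_mem (n : ℕ) : a n ∈ Sq n := Nat.sInf_mem (hSq_inf n).nonempty
  have ha_gt (n : ℕ) : ∀ x ∈ Sq (n + 1), a n < x := fun x hx =>
    not_le.mp ((hSq_succ n ▸ hnext_sub _ (hSq_inf n)) hx).2
  choose col hcol using fun n => hnext_homog _ (hSq_inf n)
  refine ⟨a, col, strictMono_nat_of_lt_succ fun n => ha_gt n _ (ha_mem _),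
    fun n => hSq_anti (Nat.zero_le n) (ha_mem n), fun n s hs hcard => hcol n s ?_ hcard⟩
  rintro _ hx
  obtain ⟨m, hm, rfl⟩ := hs hx
  exact hSq_succ n ▸ hSq_anti (Nat.succ_le_of_lt hm) (ha_mem m)

lemma homogS_image_of_insert_const {C : Finset ℕ → Fin k} {a : ℕ → ℕ} {col : ℕ → Fin k}
    (ha : StrictMono a)
    (hcol : ∀ n (s : Finset ℕ), ↑s ⊆ a '' Ioi n → s.card = d → C (insert (a n) s) = col n)
    (c : Fin k) : HomogS k (d + 1) C (a '' (col ⁻¹' {c})) := by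
  refine ⟨c, fun s hs hcard => ?_⟩
  have hne : s.Nonempty := Finset.card_pos.mp (by omega)
  have hmin := s.min'_mem hne
  obtain ⟨n, hnc, hn⟩ := hs hmin
  have hrest : ↑(s.erase (a n)) ⊆ a '' Ioi n := by
    intro x hx
    obtain ⟨hxn, hxs⟩ := Finset.mem_erase.mp hx
    obtain ⟨m, -, rfl⟩ := hs hxs
    refine ⟨m, ha.lt_iff_lt.mp (lt_of_le_of_ne ?_ (Ne.symm hxn)), rfl⟩
    exact hn ▸ s.min'_le _ hxs
  rw [← hn] at hmin
  have := hcol n _ hrest (by rw [Finset.card_erase_of_mem hmin, hcard]; rfl)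
  rwa [Finset.insert_erase hmin, hnc] at this

theorem exists_infinite_subset_homogS (C : Finset ℕ → Fin k) {S : Set ℕ} (hS : S.Infinite) :
    ∃ T ⊆ S, T.Infinite ∧ HomogS k d C T := by
  induction d generalizing C S with
  | zero => exact ⟨S, subset_rfl, hS, C ∅, fun s _ hs => by rw [Finset.card_eq_zero.mp hs]⟩
  | succ d ih =>
    obtain ⟨a, col, ha, haS, hcol⟩ := exists_strictMono_insert_const (fun C S => ih C) C hS
    obtain ⟨c, hc⟩ := Finite.exists_infinite_fiber col
    exact ⟨a '' (col ⁻¹' {c}), by rintro _ ⟨n, -, rfl⟩; exact haS n,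
      (infinite_coe_iff.mp hc).image ha.injective.injOn, homogS_image_of_insert_const ha hcol c⟩

lemma exists_forall_homogF_of_forall_range {P : Finset ℕ → Prop}
    (h : ∀ R, ∃ C : Finset ℕ → Fin k, ∀ H ⊆ Finset.range (R + 1), HomogF k d C H → P H) :
    ∃ C : Finset ℕ → Fin k, ∀ H, HomogF k d C H → P H := by
  choose CC hCC using h
  -- `C s` is the limit of the colours `CC R s` along a nonprincipal ultrafilter.
  set U : Ultrafilter ℕ := Filter.hyperfilter ℕ
  have hlim (s : Finset ℕ) : ∃ c, ∀ᶠ R in U, CC R s = c := by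
    obtain ⟨c, hc⟩ := (U.map fun R => CC R s).eq_pure_of_finite
    exact ⟨c, show {c} ∈ U.map fun R => CC R s by rw [hc]; exact rfl⟩
  choose C hC using hlim
  refine ⟨C, fun H ⟨c, hc⟩ => ?_⟩
  have hagree : ∀ᶠ R in U, ∀ s ∈ H.powersetCard d, CC R s = C s :=
    (Filter.eventually_all_finset _).mpr fun s _ => hC s
  have hrange : ∀ᶠ R in U, H ⊆ Finset.range (R + 1) := by
    refine Filter.Eventually.filter_mono (Filter.hyperfilter_le_cofinite.trans
      Nat.cofinite_eq_atTop.le) ?_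
    exact (Filter.eventually_all_finset H).mpr fun x _ =>
      (Filter.eventually_ge_atTop x).mono fun R hR => Finset.mem_range.mpr (by omega)
  obtain ⟨R, hRC, hRH⟩ := (hagree.and hrange).exists
  refine hCC R H hRH ⟨c, fun s hs hcard => ?_⟩
  rw [hRC s (Finset.mem_powersetCard.mpr ⟨hs, hcard⟩)]
  exact hc s hs hcard

lemma AsympStable.exists_subset_lt_card {F : Finset ℕ → ℕ} (hF : AsympStable F) {T : Set ℕ}
    (hT : T.Infinite) : ∃ H : Finset ℕ, ↑H ⊆ T ∧ F H < H.card := by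
  set X : ℕ → Finset ℕ := fun i => (Finset.range i).image (Nat.nth (· ∈ T))
  have hX_card (i : ℕ) : (X i).card = i :=
    (Finset.card_image_of_injective _ (Nat.nth_injective hT)).trans (Finset.card_range i)
  have hX_sub (i : ℕ) : ↑(X i) ⊆ T := by
    simp only [X, Finset.coe_image]
    rintro _ ⟨j, -, rfl⟩
    exact Nat.nth_mem_of_infinite hT j
  obtain ⟨i, hi⟩ := hF X fun i => Finset.image_subset_image (Finset.range_subset_range.mpr i.le_succ)
  set j := i + F (X i) + 1
  refine ⟨X j, hX_sub j, ?_⟩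
  rw [hi j (by omega), hX_card]
  omega

theorem exists_range_homogF_lt_card {F : Finset ℕ → ℕ} (hF : AsympStable F) :
    ∃ R : ℕ, ∀ C : Finset ℕ → Fin k,
      ∃ H ⊆ Finset.range (R + 1), HomogF k d C H ∧ F H < H.card := by
  by_contra! h
  obtain ⟨C, hC⟩ := exists_forall_homogF_of_forall_range h
  obtain ⟨T, -, hT_inf, hT⟩ := exists_infinite_subset_homogS (d := d) C infinite_univ
  obtain ⟨H, hHT, hH⟩ := hF.exists_subset_lt_card hT_inf
  exact (hC H (hT.homogF hHT)).not_gt hH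

theorem frt_iff_ramsey_counterexample_general (d k : ℕ) :
    ((∃ F : Finset ℕ → ℕ, AsympStable F ∧
        ∀ R : ℕ, ∃ C : Finset ℕ → Fin k,
          ∀ H : Finset ℕ, H ⊆ Finset.range (R + 1) → HomogF k d C H → H.card ≤ F H) ↔
      (∃ C : Finset ℕ → Fin k, ∀ H : Set ℕ, HomogS k d C H → H.Finite)) ∧
    (∀ F : Finset ℕ → ℕ, AsympStable F →
      ∃ R : ℕ, ∀ C : Finset ℕ → Fin k,
        ∃ H : Finset ℕ, H ⊆ Finset.range (R + 1) ∧ HomogF k d C H ∧ F H < H.card) := by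
  have frt (F : Finset ℕ → ℕ) (hF : AsympStable F) := exists_range_homogF_lt_card (k := k) (d := d) hF
  refine ⟨⟨fun ⟨F, hF, hbad⟩ => ?_, fun ⟨C, hfin⟩ => ?_⟩, frt⟩
  · obtain ⟨R, hR⟩ := frt F hF
    obtain ⟨C, hC⟩ := hbad R
    obtain ⟨H, hHR, hH, hlt⟩ := hR C
    exact absurd (hC H hHR hH) hlt.not_ge
  · obtain ⟨T, -, hT_inf, hT⟩ := exists_infinite_subset_homogS (d := d) C infinite_univ
    exact absurd (hfin T hT) hT_inf

theorem frt_iff_ramsey_counterexample (d k : ℕ) (hd : 1 ≤ d) (hk : 1 ≤ k) :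
    ((∃ F : Finset ℕ → ℕ, AsympStable F ∧
        ∀ R : ℕ, ∃ C : Finset ℕ → Fin k,
          ∀ H : Finset ℕ, H ⊆ Finset.range (R + 1) → HomogF k d C H → H.card ≤ F H) ↔
      (∃ C : Finset ℕ → Fin k, ∀ H : Set ℕ, HomogS k d C H → H.Finite)) ∧
    (∀ F : Finset ℕ → ℕ, AsympStable F →
      ∃ R : ℕ, ∀ C : Finset ℕ → Fin k,
        ∃ H : Finset ℕ, H ⊆ Finset.range (R + 1) ∧ HomogF k d C H ∧ F H < H.card) :=
  frt_iff_ramsey_counterexample_general d k
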